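/- Consider the structured sparse prior with kernel k(β) = exp(-λ Σ_{g=1}^G sqrt(β^T F_g β)) for a factorial design with J factors each having L_j levels, including all main effects and all two-way interactions, where the penalties encourage all pairwise fusions of levels within each factor. Then, restricted to the linear subspace defined by the ANOVA sum-to-zero constraints C^T β = 0, the prior is proper (has finite integral over that subspace). -/

import Mathlib

open MeasureTheory Matrix

/-- Index of a main-effect coefficient `β^j_l`. -/
def MainIdx (J : ℕ) (L : Fin J → ℕ) := Σ j : Fin J, Fin (L j)

/-- Index of an ordered pair of factors `j < j'`. -/
def PairIdx (J : ℕ) := {pr : Fin J × Fin J // pr.1 < pr.2}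

/-- Index of an interaction coefficient `β^{jj'}_{ll'}` for `j < j'`. -/
def InterIdx (J : ℕ) (L : Fin J → ℕ) :=
  Σ pr : PairIdx J, Fin (L pr.1.1) × Fin (L pr.1.2)

/-- Index of the full coefficient vector (main effects and two-way interactions). -/
def Idx (J : ℕ) (L : Fin J → ℕ) := MainIdx J L ⊕ InterIdx J L

instance (J : ℕ) : Fintype (PairIdx J) := by
  unfold PairIdx; infer_instance

instance (J : ℕ) (L : Fin J → ℕ) : Fintype (Idx J L) := by
  unfold Idx MainIdx InterIdx PairIdx; infer_instance

/-- The quadratic form `βᵀ F_g β` for the fusion group `g = (j, l₁, l₂)`: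
the squared difference of the main effects of levels `l₁, l₂` of factor `j`
plus the squared differences of all interaction coefficients involving
factor `j` at those two levels. -/
def fusionQuad {J : ℕ} {L : Fin J → ℕ} (β : Idx J L → ℝ) (j : Fin J)
    (l₁ l₂ : Fin (L j)) : ℝ :=
  (β (Sum.inl ⟨j, l₁⟩) - β (Sum.inl ⟨j, l₂⟩)) ^ 2
    + ∑ pr : PairIdx J,
        (if h : pr.1.1 = j then
          ∑ m : Fin (L pr.1.2),
            (β (Sum.inr ⟨pr, (Fin.cast (congrArg L h).symm l₁, m)⟩)
              - β (Sum.inr ⟨pr, (Fin.cast (congrArg L h).symm l₂, m)⟩)) ^ 2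
        else 0)
    + ∑ pr : PairIdx J,
        (if h : pr.1.2 = j then
          ∑ m : Fin (L pr.1.1),
            (β (Sum.inr ⟨pr, (m, Fin.cast (congrArg L h).symm l₁)⟩)
              - β (Sum.inr ⟨pr, (m, Fin.cast (congrArg L h).symm l₂)⟩)) ^ 2
        else 0)

/-- The structured sparse penalty `Σ_g √(βᵀ F_g β)`, summing over all factors
`j` and all pairs of levels `l₁ < l₂` of factor `j`. -/
noncomputable def fusionPenalty {J : ℕ} {L : Fin J → ℕ} (β : Idx J L → ℝ) : ℝ :=
  ∑ j : Fin J, ∑ pl : {pl : Fin (L j) × Fin (L j) // pl.1 < pl.2},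
    Real.sqrt (fusionQuad β j pl.1.1 pl.1.2)

/-- The ANOVA sum-to-zero constraint set `{β : Cᵀβ = 0}`. -/
def sumToZero (J : ℕ) (L : Fin J → ℕ) : Set (Idx J L → ℝ) :=
  {β | (∀ j : Fin J, ∑ l, β (Sum.inl ⟨j, l⟩) = 0) ∧
       (∀ pr : PairIdx J, ∀ l' : Fin (L pr.1.2),
          ∑ l, β (Sum.inr ⟨pr, (l, l')⟩) = 0)}

/-! The penalty `p β = Σ_g √(βᵀ F_g β)` is continuous and absolutely homogeneous of degree one.
On the sum-to-zero subspace it vanishes only at `β = 0`: `p β = 0` forces all levels of each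
factor to carry the same main effect and the same interaction coefficients, and a constant
vector summing to zero is zero. Pulled back along the injective parametrisation `B`, compactness
of the unit sphere then gives `p (B x) ≥ c ‖x‖` with `c > 0`, so the kernel is dominated by
`exp (-λ c ‖x‖)`, which is integrable on a finite-dimensional space. -/

theorem integrable_exp_neg_mul_norm {E : Type*} [NormedAddCommGroup E] [NormedSpace ℝ E]
    [FiniteDimensional ℝ E] [MeasurableSpace E] [BorelSpace E] (μ : Measure E)
    [μ.IsAddHaarMeasure] {a : ℝ} (ha : 0 < a) :
    Integrable (fun x => Real.exp (-a * ‖x‖)) μ := by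
  rcases subsingleton_or_nontrivial E with hE | hE
  · simp only [Subsingleton.elim _ (0 : E), norm_zero]
    exact integrable_const _
  · rw [integrable_fun_norm_addHaar μ (f := fun y => Real.exp (-a * y))]
    refine (integrableOn_rpow_mul_exp_neg_mul_rpow (s := (Module.finrank ℝ E - 1 : ℕ))
      (neg_one_lt_zero.trans_le (Nat.cast_nonneg _)) one_pos ha).congr_fun (fun y _ => ?_)
      measurableSet_Ioi
    simp [Real.rpow_natCast]

theorem exists_pos_mul_norm_le {E : Type*} [NormedAddCommGroup E] [NormedSpace ℝ E]
    [FiniteDimensional ℝ E] {f : E → ℝ} (hf : Continuous f)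
    (hsmul : ∀ t : ℝ, 0 ≤ t → ∀ x, f (t • x) = t * f x) (hpos : ∀ x, x ≠ 0 → 0 < f x) :
    ∃ c > 0, ∀ x, c * ‖x‖ ≤ f x := by
  have hf0 : f 0 = 0 := by simpa using hsmul 0 le_rfl 0
  rcases subsingleton_or_nontrivial E with hE | hE
  · exact ⟨1, one_pos, fun x => by simp [Subsingleton.elim x 0, hf0]⟩
  obtain ⟨x₀, hx₀, hmin⟩ := (isCompact_sphere (0 : E) 1).exists_isMinOn
    (NormedSpace.sphere_nonempty.mpr zero_le_one) hf.continuousOn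
  refine ⟨f x₀, hpos x₀ (ne_zero_of_mem_unit_sphere ⟨x₀, hx₀⟩), fun x => ?_⟩
  rcases eq_or_ne x 0 with rfl | hx
  · simp [hf0]
  have hnx : 0 < ‖x‖ := norm_pos_iff.mpr hx
  have hu : ‖x‖⁻¹ • x ∈ Metric.sphere (0 : E) 1 := by
    simp [norm_smul, hnx.ne']
  calc f x₀ * ‖x‖ ≤ f (‖x‖⁻¹ • x) * ‖x‖ := by gcongr; exact hmin hu
    _ = f x := by rw [hsmul _ (inv_nonneg.mpr hnx.le)]; field_simp

theorem eq_zero_of_sum_eq_zero_of_forall_eq {ι M : Type*} [Fintype ι] [AddCommMonoid M]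
    [IsAddTorsionFree M] {g : ι → M} (hg : ∀ i j, g i = g j) (hsum : ∑ i, g i = 0)
    (i : ι) : g i = 0 := by
  have : Nonempty ι := ⟨i⟩
  rw [Finset.sum_congr rfl fun k _ => hg k i, Finset.sum_const, Finset.card_univ] at hsum
  exact (smul_eq_zero.mp hsum).resolve_left Fintype.card_ne_zero

section Fusion

variable {J : ℕ} {L : Fin J → ℕ}

lemma fusionQuad_smul (t : ℝ) (β : Idx J L → ℝ) (j : Fin J) (l₁ l₂ : Fin (L j)) :
    fusionQuad (t • β) j l₁ l₂ = t ^ 2 * fusionQuad β j l₁ l₂ := by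
  change fusionQuad (fun i => t * β i) j l₁ l₂ = _
  simp only [fusionQuad, ← mul_sub, mul_pow, mul_add, Finset.mul_sum, mul_dite, mul_zero]

lemma fusionQuad_comm (β : Idx J L → ℝ) (j : Fin J) (l₁ l₂ : Fin (L j)) :
    fusionQuad β j l₁ l₂ = fusionQuad β j l₂ l₁ := by
  unfold fusionQuad
  congr 1; congr 1
  · exact sub_sq_comm _ _
  all_goals exact Finset.sum_congr rfl fun _ _ =>
    dite_congr rfl (fun _ => Finset.sum_congr rfl fun _ _ => sub_sq_comm _ _) fun _ => rfl

lemma fusionQuad_self (β : Idx J L → ℝ) (j : Fin J) (l : Fin (L j)) :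
    fusionQuad β j l l = 0 := by
  simp [fusionQuad]

lemma sq_sub_inl_le_fusionQuad (β : Idx J L → ℝ) (j : Fin J) (l₁ l₂ : Fin (L j)) :
    (β (.inl ⟨j, l₁⟩) - β (.inl ⟨j, l₂⟩)) ^ 2 ≤ fusionQuad β j l₁ l₂ := by
  unfold fusionQuad
  refine le_add_of_le_of_nonneg (le_add_of_nonneg_right ?_) ?_ <;>
    exact Finset.sum_nonneg fun _ _ => by split <;> positivity

lemma sq_sub_inr_le_fusionQuad (β : Idx J L → ℝ) (pr : PairIdx J) (l₁ l₂ : Fin (L pr.1.1))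
    (m : Fin (L pr.1.2)) :
    (β (.inr ⟨pr, (l₁, m)⟩) - β (.inr ⟨pr, (l₂, m)⟩)) ^ 2 ≤ fusionQuad β pr.1.1 l₁ l₂ := by
  unfold fusionQuad
  refine le_add_of_le_of_nonneg (le_add_of_nonneg_of_le (sq_nonneg _) ?_)
    (Finset.sum_nonneg fun _ _ => by split <;> positivity)
  refine le_trans ?_ (Finset.single_le_sum (fun _ _ => by split <;> positivity)
    (Finset.mem_univ pr))
  rw [dif_pos rfl]
  exact Finset.single_le_sum
    (fun m _ => sq_nonneg (β (.inr ⟨pr, (l₁, m)⟩) - β (.inr ⟨pr, (l₂, m)⟩))) (Finset.mem_univ m)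

lemma continuous_fusionPenalty : Continuous (fusionPenalty : (Idx J L → ℝ) → ℝ) := by
  refine continuous_finsetSum _ fun j _ => continuous_finsetSum _ fun pl _ =>
    Real.continuous_sqrt.comp ?_
  unfold fusionQuad
  refine .add (.add (by fun_prop) (continuous_finsetSum _ fun pr _ => ?_))
    (continuous_finsetSum _ fun pr _ => ?_) <;> split <;> fun_prop

lemma fusionPenalty_nonneg (β : Idx J L → ℝ) : 0 ≤ fusionPenalty β :=
  Finset.sum_nonneg fun _ _ => Finset.sum_nonneg fun _ _ => Real.sqrt_nonneg _

lemma fusionPenalty_smul (t : ℝ) (β : Idx J L → ℝ) :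
    fusionPenalty (t • β) = |t| * fusionPenalty β := by
  simp only [fusionPenalty, Finset.mul_sum, fusionQuad_smul, Real.sqrt_mul (sq_nonneg t),
    Real.sqrt_sq_eq_abs]

lemma sqrt_fusionQuad_le_fusionPenalty (β : Idx J L → ℝ) (j : Fin J) (l₁ l₂ : Fin (L j)) :
    √(fusionQuad β j l₁ l₂) ≤ fusionPenalty β := by
  wlog h : l₁ < l₂ generalizing l₁ l₂
  · rcases (not_lt.mp h).lt_or_eq with h | rfl
    · rw [fusionQuad_comm]; exact this _ _ h
    · simp [fusionQuad_self, fusionPenalty_nonneg]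
  refine le_trans ?_ (Finset.single_le_sum
    (fun _ _ => Finset.sum_nonneg fun _ _ => Real.sqrt_nonneg _) (Finset.mem_univ j))
  exact Finset.single_le_sum (fun pl _ => Real.sqrt_nonneg (fusionQuad β j pl.1.1 pl.1.2))
    (Finset.mem_univ (⟨(l₁, l₂), h⟩ : {pl : Fin (L j) × Fin (L j) // pl.1 < pl.2}))

lemma abs_sub_inl_le_fusionPenalty (β : Idx J L → ℝ) (j : Fin J) (l₁ l₂ : Fin (L j)) :
    |β (.inl ⟨j, l₁⟩) - β (.inl ⟨j, l₂⟩)| ≤ fusionPenalty β := by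
  rw [← Real.sqrt_sq_eq_abs]
  exact (Real.sqrt_le_sqrt (sq_sub_inl_le_fusionQuad β j l₁ l₂)).trans
    (sqrt_fusionQuad_le_fusionPenalty β j l₁ l₂)

lemma abs_sub_inr_le_fusionPenalty (β : Idx J L → ℝ) (pr : PairIdx J)
    (l₁ l₂ : Fin (L pr.1.1)) (m : Fin (L pr.1.2)) :
    |β (.inr ⟨pr, (l₁, m)⟩) - β (.inr ⟨pr, (l₂, m)⟩)| ≤ fusionPenalty β := by
  rw [← Real.sqrt_sq_eq_abs]
  exact (Real.sqrt_le_sqrt (sq_sub_inr_le_fusionQuad β pr l₁ l₂ m)).trans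
    (sqrt_fusionQuad_le_fusionPenalty β pr.1.1 l₁ l₂)

lemma eq_zero_of_fusionPenalty_eq_zero {β : Idx J L → ℝ} (hβ : β ∈ sumToZero J L)
    (h : fusionPenalty β = 0) : β = 0 := by
  funext i
  rcases i with ⟨j, l⟩ | ⟨pr, l, m⟩
  · refine eq_zero_of_sum_eq_zero_of_forall_eq (fun l₁ l₂ => ?_) (hβ.1 j) l
    simpa [h, sub_eq_zero] using abs_sub_inl_le_fusionPenalty β j l₁ l₂
  · refine eq_zero_of_sum_eq_zero_of_forall_eq (fun l₁ l₂ => ?_) (hβ.2 pr m) l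
    simpa [h, sub_eq_zero] using abs_sub_inr_le_fusionPenalty β pr l₁ l₂ m

lemma fusionPenalty_pos {β : Idx J L → ℝ} (hβ : β ∈ sumToZero J L) (hne : β ≠ 0) :
    0 < fusionPenalty β :=
  (fusionPenalty_nonneg β).lt_of_ne fun h => hne (eq_zero_of_fusionPenalty_eq_zero hβ h.symm)

end Fusion

/-- Propriety of the structured sparse prior: restricted to the subspace defined
by the ANOVA sum-to-zero constraints (parameterized by any basis `B` of that
subspace), the kernel `exp(-λ Σ_g √(βᵀ F_g β))` has finite integral. -/
theorem stmt6 (J : ℕ) (L : Fin J → ℕ) (lam : ℝ) (hlam : 0 < lam)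
    (r : ℕ) (B : Matrix (Idx J L) (Fin r) ℝ)
    (hinj : Function.Injective B.mulVec)
    (hrange : Set.range B.mulVec = sumToZero J L) :
    Integrable
      (fun x : Fin r → ℝ => Real.exp (-lam * fusionPenalty (B.mulVec x)))
      volume := by
  have hcont : Continuous fun x : Fin r → ℝ => fusionPenalty (B *ᵥ x) :=
    continuous_fusionPenalty.comp (Continuous.matrix_mulVec continuous_const continuous_id)
  obtain ⟨c, hc, hle⟩ := exists_pos_mul_norm_le hcont
    (fun t ht x => by rw [mulVec_smul, fusionPenalty_smul, abs_of_nonneg ht])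
    (fun x hx => fusionPenalty_pos (hrange ▸ Set.mem_range_self x)
      fun h => hx (hinj (h.trans (mulVec_zero B).symm)))
  refine (integrable_exp_neg_mul_norm volume (mul_pos hlam hc)).mono'
    (by fun_prop : Continuous _).aestronglyMeasurable (ae_of_all _ fun x => ?_)
  rw [Real.norm_of_nonneg (Real.exp_pos _).le, Real.exp_le_exp, neg_mul, neg_mul, mul_assoc]
  exact neg_le_neg (mul_le_mul_of_nonneg_left (hle x) hlam.le)
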